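/- Let k ≥ 1, m ≥ 1, Σ a finite set, Φ ∈ Σ^{k×d}, and T an in-tree on [k]. For each edge e = (a,b) ∈ T let w_e : [k] × Σ → ℝ satisfy |w_e(c,σ)| ≤ m/2 for all c, σ and w_e(c,σ) = 0 whenever c ∉ {a,b}. Define G(a,σ)_b = Σ_{e ∈ path_T(b)} w_e(a,σ). Let q, r ∈ ℝ^k be probability vectors with q_b ≤ k r_b for all b and with r increasing along T toward the root (r_a ≤ r_b for every edge (a,b) ∈ T). Suppose 0 < η ≤ 1/(m k²), let γ = η m k² / 2 and p = (1−γ) r + γ 𝟙/k. Then p is a probability vector, η G(a, Φ_{a,x})_b / p_a ≥ −1 for all a, b, x, and for every x ∈ [d]: (1/η²) Σ_{a=1}^k p_a Ψ_q( η G(a, Φ_{a,x}) / p_a ) ≤ 2 k³ m². -/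

import Mathlib

/-!
A weight `w_e(a, ·)` vanishes unless `a` is an endpoint of `e`, and a path to the root meets each
vertex at most once, so `G(a, σ)_b` is a sum of at most two terms: `|G| ≤ m` (and `G = 0` when
`k = 1`), hence `η |G| ≤ η m k / 2 = γ / k ≤ p_a`. Moreover `G(a, σ)_b ≠ 0` forces `a` onto the
path from `b` to the root, where `r` increases, so `q_b ≤ k r_b ≤ k r_a ≤ 2 k p_a`. On `[-1, 1]`,
`exp (-x) + x - 1 ≤ x²`, so `p_a Ψ_q(η G(a) / p_a) ≤ η² ∑_b q_b G_b² / p_a ≤ 2 k² m² η²`, and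
summing over `a` gives the bound.
-/

/-- `Ψ_q(z) = ∑_a q_a (exp(-z_a) + z_a - 1)`. -/
noncomputable def Psi {k : ℕ} (q z : Fin k → ℝ) : ℝ :=
  ∑ a, q a * (Real.exp (-z a) + z a - 1)

/-- A directed in-tree on a finite vertex type `V`: every vertex has a parent
(the root is its own parent) and every vertex reaches the root by iterating
the parent map. -/
structure InTree (V : Type*) [Fintype V] [DecidableEq V] where
  root : V
  par : V → V
  par_root : par root = root
  reaches : ∀ v : V, ∃ n : ℕ, par^[n] v = root

variable {V : Type*} [Fintype V] [DecidableEq V]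

/-- The edge set of an in-tree. -/
def InTree.edges (T : InTree V) : Finset (V × V) :=
  (Finset.univ.filter (fun v => v ≠ T.root)).image (fun v => (v, T.par v))

/-- The depth of a vertex: the number of steps needed to reach the root. -/
def InTree.depth (T : InTree V) (v : V) : ℕ := Nat.find (T.reaches v)

/-- The set of edges on the directed path from `v` to the root. -/
def InTree.path (T : InTree V) (v : V) : Finset (V × V) :=
  (Finset.range (T.depth v)).image (fun i => (T.par^[i] v, T.par^[i + 1] v))

namespace InTree

variable (T : InTree V)

lemma iterate_depth (v : V) : T.par^[T.depth v] v = T.root :=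
  Nat.find_spec (T.reaches v)

lemma iterate_ne_root {v : V} {i : ℕ} (h : i < T.depth v) : T.par^[i] v ≠ T.root :=
  Nat.find_min (T.reaches v) h

lemma injOn_iterate (v : V) : Set.InjOn (fun i => T.par^[i] v) (Set.Iic (T.depth v)) := by
  -- if `par^[i] v = par^[j] v` with `i < j`, then `depth v - j + i < depth v` steps already
  -- reach the root
  have key : ∀ {i j}, i < j → j ≤ T.depth v → T.par^[i] v ≠ T.par^[j] v := by
    intro i j hij hj h
    apply T.iterate_ne_root (v := v) (i := T.depth v - j + i) (by omega)
    calc T.par^[T.depth v - j + i] v = T.par^[T.depth v - j] (T.par^[j] v) := by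
          rw [Function.iterate_add_apply, h]
      _ = T.root := by rw [← Function.iterate_add_apply, Nat.sub_add_cancel hj, T.iterate_depth]
  intro i hi j hj h
  rcases lt_trichotomy i j with hij | rfl | hij
  · exact absurd h (key hij hj)
  · rfl
  · exact absurd h.symm (key hij hi)

lemma depth_lt_card (v : V) : T.depth v < Fintype.card V := by
  have := Finset.card_le_card_of_injOn (fun i => T.par^[i] v) (s := Finset.range (T.depth v + 1))
    (t := Finset.univ) (fun _ _ => Finset.mem_coe.2 (Finset.mem_univ _))
    ((T.injOn_iterate v).mono fun i hi => by simpa [Nat.lt_succ_iff] using hi)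
  simpa using this

lemma path_eq_empty_of_card_le_one (h : Fintype.card V ≤ 1) (v : V) : T.path v = ∅ := by
  have : T.depth v = 0 := by have := T.depth_lt_card v; omega
  simp [path, this]

lemma mem_path {v : V} {e : V × V} :
    e ∈ T.path v ↔ ∃ i < T.depth v, (T.par^[i] v, T.par^[i + 1] v) = e := by
  simp [path]

lemma path_subset_edges (v : V) : T.path v ⊆ T.edges := by
  intro e he
  obtain ⟨i, hi, rfl⟩ := T.mem_path.1 he
  simp only [edges, Finset.mem_image, Finset.mem_filter, Finset.mem_univ, true_and]
  exact ⟨_, T.iterate_ne_root hi, by rw [Function.iterate_succ_apply']⟩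

lemma injOn_fst_path (v : V) : Set.InjOn Prod.fst (T.path v : Set (V × V)) := by
  rintro _ he _ he' h
  obtain ⟨i, -, rfl⟩ := T.mem_path.1 he
  obtain ⟨j, -, rfl⟩ := T.mem_path.1 he'
  simp only [Function.iterate_succ_apply'] at h ⊢
  rw [h]

lemma injOn_snd_path (v : V) : Set.InjOn Prod.snd (T.path v : Set (V × V)) := by
  rintro _ he _ he' h
  obtain ⟨i, hi, rfl⟩ := T.mem_path.1 he
  obtain ⟨j, hj, rfl⟩ := T.mem_path.1 he'
  have : i + 1 = j + 1 :=
    T.injOn_iterate v (Set.mem_Iic.2 (by omega)) (Set.mem_Iic.2 (by omega)) h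
  rw [show i = j by omega]

lemma abs_sum_path_le {f : V × V → ℝ} {M : ℝ} (hM0 : 0 ≤ M) (a : V)
    (hM : ∀ e ∈ T.edges, |f e| ≤ M) (hf : ∀ e ∈ T.edges, a ≠ e.1 → a ≠ e.2 → f e = 0)
    (v : V) : |∑ e ∈ T.path v, f e| ≤ 2 * M := by
  set A := (T.path v).filter (fun e => e.1 = a ∨ e.2 = a) with hA_def
  have hsum : ∑ e ∈ T.path v, f e = ∑ e ∈ A, f e := by
    refine (Finset.sum_filter_of_ne fun e he hfe => ?_).symm
    by_contra! h
    exact hfe (hf e (T.path_subset_edges v he) (Ne.symm h.1) (Ne.symm h.2))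
  -- a path to the root passes through `a` at most once, so at most two of its edges touch `a`
  have h1 : ((T.path v).filter (fun e => e.1 = a)).card ≤ 1 := by
    refine Finset.card_le_one.2 fun e he e' he' => ?_
    simp only [Finset.mem_filter] at he he'
    exact T.injOn_fst_path v he.1 he'.1 (he.2.trans he'.2.symm)
  have h2 : ((T.path v).filter (fun e => e.2 = a)).card ≤ 1 := by
    refine Finset.card_le_one.2 fun e he e' he' => ?_
    simp only [Finset.mem_filter] at he he'
    exact T.injOn_snd_path v he.1 he'.1 (he.2.trans he'.2.symm)
  have hA : A.card ≤ 2 := by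
    rw [hA_def, Finset.filter_or]
    exact (Finset.card_union_le _ _).trans (by omega)
  calc |∑ e ∈ T.path v, f e| ≤ ∑ e ∈ A, |f e| := hsum ▸ Finset.abs_sum_le_sum_abs _ _
    _ ≤ A.card • M := Finset.sum_le_card_nsmul _ _ _ fun e he =>
        hM e (T.path_subset_edges v (Finset.mem_filter.1 he).1)
    _ ≤ 2 * M := by rw [nsmul_eq_mul]; gcongr; exact_mod_cast hA

lemma abs_sum_path_le_mul_card {f : V × V → ℝ} {M : ℝ} (hM0 : 0 ≤ M) (a : V)
    (hM : ∀ e ∈ T.edges, |f e| ≤ M) (hf : ∀ e ∈ T.edges, a ≠ e.1 → a ≠ e.2 → f e = 0)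
    (v : V) : |∑ e ∈ T.path v, f e| ≤ M * Fintype.card V := by
  rcases le_or_gt (Fintype.card V) 1 with h | h
  · simp only [T.path_eq_empty_of_card_le_one h, Finset.sum_empty, abs_zero]
    positivity
  · calc |∑ e ∈ T.path v, f e| ≤ 2 * M := T.abs_sum_path_le hM0 a hM hf v
      _ ≤ M * Fintype.card V := by
        rw [mul_comm]; gcongr; exact_mod_cast h

lemma le_iterate_par {g : V → ℝ} (hg : ∀ e ∈ T.edges, g e.1 ≤ g e.2) (v : V) {i : ℕ}
    (hi : i ≤ T.depth v) : g v ≤ g (T.par^[i] v) := by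
  induction i with
  | zero => rfl
  | succ i ih =>
    exact (ih (by omega)).trans (hg _ (T.path_subset_edges v (T.mem_path.2 ⟨i, hi, rfl⟩)))

lemma le_of_sum_path_ne_zero {f : V × V → ℝ} {g : V → ℝ} {a v : V}
    (hf : ∀ e ∈ T.edges, a ≠ e.1 → a ≠ e.2 → f e = 0) (hg : ∀ e ∈ T.edges, g e.1 ≤ g e.2)
    (h : ∑ e ∈ T.path v, f e ≠ 0) : g v ≤ g a := by
  obtain ⟨e, he, hfe⟩ := Finset.exists_ne_zero_of_sum_ne_zero h
  obtain ⟨i, hi, rfl⟩ := T.mem_path.1 he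
  by_cases ha₁ : a = T.par^[i] v
  · exact ha₁ ▸ T.le_iterate_par hg v hi.le
  by_cases ha₂ : a = T.par^[i + 1] v
  · exact ha₂ ▸ T.le_iterate_par hg v hi
  exact absurd (hf _ (T.path_subset_edges v he) ha₁ ha₂) hfe

lemma mul_sq_sum_path_le {f : V × V → ℝ} {q r : V → ℝ} {a v : V} {κ M : ℝ}
    (hf : ∀ e ∈ T.edges, a ≠ e.1 → a ≠ e.2 → f e = 0) (hr : ∀ e ∈ T.edges, r e.1 ≤ r e.2)
    (hκ : 0 ≤ κ) (hra : 0 ≤ r a) (hqr : q v ≤ κ * r v) (hM : |∑ e ∈ T.path v, f e| ≤ M) :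
    q v * (∑ e ∈ T.path v, f e) ^ 2 ≤ κ * r a * M ^ 2 := by
  by_cases h0 : ∑ e ∈ T.path v, f e = 0
  · rw [h0, zero_pow two_ne_zero, mul_zero]
    positivity
  have hq : q v ≤ κ * r a := hqr.trans (by gcongr; exact T.le_of_sum_path_ne_zero hf hr h0)
  exact mul_le_mul hq (sq_le_sq' (abs_le.1 hM).1 (abs_le.1 hM).2) (sq_nonneg _) (by positivity)

end InTree

lemma exp_neg_add_sub_one_le_sq {x : ℝ} (hx : |x| ≤ 1) : Real.exp (-x) + x - 1 ≤ x ^ 2 := by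
  have := le_of_abs_le (Real.abs_exp_sub_one_sub_id_le (x := -x) (by rwa [abs_neg]))
  nlinarith

lemma Psi_le_sum_mul_sq {k : ℕ} {q z : Fin k → ℝ} (hq : ∀ b, 0 ≤ q b) (hz : ∀ b, |z b| ≤ 1) :
    Psi q z ≤ ∑ b, q b * z b ^ 2 :=
  Finset.sum_le_sum fun b _ => mul_le_mul_of_nonneg_left (exp_neg_add_sub_one_le_sq (hz b)) (hq b)

lemma sum_mul_Psi_le {k : ℕ} {p q : Fin k → ℝ} {g : Fin k → Fin k → ℝ} {η C : ℝ}
    (hp : ∀ a, 0 < p a) (hq : ∀ b, 0 ≤ q b) (hz : ∀ a b, |η * g a b / p a| ≤ 1)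
    (hC : ∀ a b, q b * g a b ^ 2 ≤ C * p a) :
    ∑ a, p a * Psi q (fun b => η * g a b / p a) ≤ k ^ 2 * (η ^ 2 * C) := by
  have hterm : ∀ a, p a * Psi q (fun b => η * g a b / p a) ≤ k * (η ^ 2 * C) := fun a =>
    calc p a * Psi q (fun b => η * g a b / p a)
        ≤ p a * ∑ b, q b * (η * g a b / p a) ^ 2 :=
          mul_le_mul_of_nonneg_left (Psi_le_sum_mul_sq hq (hz a)) (hp a).le
      _ = ∑ b, η ^ 2 * (q b * g a b ^ 2 / p a) := by
          rw [Finset.mul_sum]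
          refine Finset.sum_congr rfl fun b _ => ?_
          field_simp [(hp a).ne']
      _ ≤ ∑ _b : Fin k, η ^ 2 * C := Finset.sum_le_sum fun b _ => by
          gcongr
          exact (div_le_iff₀ (hp a)).2 (hC a b)
      _ = k * (η ^ 2 * C) := by simp
  calc ∑ a, p a * Psi q (fun b => η * g a b / p a) ≤ ∑ _a : Fin k, k * (η ^ 2 * C) :=
        Finset.sum_le_sum fun a _ => hterm a
    _ = k ^ 2 * (η ^ 2 * C) := by simp; ring

theorem stmt8_general (k d m : ℕ) (S : Type*) [Fintype S]
    (Φ : Fin k → Fin d → S)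
    (T : InTree (Fin k))
    (w : (Fin k × Fin k) → Fin k → S → ℝ)
    (hwb : ∀ e ∈ T.edges, ∀ (c : Fin k) (σ : S), |w e c σ| ≤ (m : ℝ) / 2)
    (hws : ∀ e ∈ T.edges, ∀ (c : Fin k) (σ : S),
      c ≠ e.1 → c ≠ e.2 → w e c σ = 0)
    (G : Fin k → S → Fin k → ℝ)
    (hG : ∀ (a : Fin k) (σ : S) (b : Fin k), G a σ b = ∑ e ∈ T.path b, w e a σ)
    (q r : Fin k → ℝ)
    (hq0 : ∀ a, 0 ≤ q a)
    (hr0 : ∀ a, 0 ≤ r a) (hr1 : ∑ a, r a = 1)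
    (hqr : ∀ b, q b ≤ k * r b)
    (hrT : ∀ e ∈ T.edges, r e.1 ≤ r e.2)
    (η : ℝ) (hη : 0 < η) (hη2 : η ≤ 1 / (m * k ^ 2))
    (γ : ℝ) (hγ : γ = η * m * k ^ 2 / 2)
    (p : Fin k → ℝ) (hp : ∀ a, p a = (1 - γ) * r a + γ / k) :
    (∀ a, 0 ≤ p a) ∧ (∑ a, p a = 1) ∧
    (∀ (a b : Fin k) (x : Fin d), -1 ≤ η * G a (Φ a x) b / p a) ∧
    (∀ x : Fin d,
      (1 / η ^ 2) * ∑ a, p a * Psi q (fun b => η * G a (Φ a x) b / p a)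
        ≤ 2 * k ^ 3 * m ^ 2) := by
  -- since `1 / 0 = 0`, the bound `0 < η ≤ 1 / (m k²)` forces `m k² > 0`
  have hmk : 0 < (m : ℝ) * k ^ 2 := one_div_pos.1 (hη.trans_le hη2)
  have hk : (0 : ℝ) < k := Nat.cast_pos.2 (Nat.pos_of_ne_zero fun h => by simp [h] at hmk)
  have hγ0 : 0 < γ := by rw [hγ, mul_assoc]; exact half_pos (mul_pos hη hmk)
  have hγ1 : γ ≤ 1 / 2 := by rw [hγ]; linarith [(le_div_iff₀ hmk).1 hη2]
  have hp_lb : ∀ a, γ / k ≤ p a := fun a => by rw [hp]; nlinarith [hr0 a]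
  have hp_pos : ∀ a, 0 < p a := fun a => (div_pos hγ0 hk).trans_le (hp_lb a)
  have hp_r : ∀ a, r a ≤ 2 * p a := fun a => by rw [hp]; nlinarith [hr0 a, div_pos hγ0 hk]
  have hGm : ∀ a σ b, |G a σ b| ≤ m := fun a σ b => by
    rw [hG]
    exact (T.abs_sum_path_le (by positivity) a (hwb · · a σ) (hws · · a σ) b).trans_eq (by ring)
  have hz : ∀ a σ b, |η * G a σ b / p a| ≤ 1 := fun a σ b => by
    rw [abs_div, abs_mul, abs_of_pos hη, abs_of_pos (hp_pos a), div_le_one (hp_pos a), hG]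
    calc η * |∑ e ∈ T.path b, w e a σ| ≤ η * (m / 2 * k) := by
          grw [T.abs_sum_path_le_mul_card (by positivity) a (hwb · · a σ) (hws · · a σ) b]
          simp
      _ = γ / k := by rw [hγ]; field_simp
      _ ≤ p a := hp_lb a
  have hC : ∀ a σ b, q b * G a σ b ^ 2 ≤ 2 * k * m ^ 2 * p a := fun a σ b => by
    have := T.mul_sq_sum_path_le (hws · · a σ) hrT hk.le (hr0 a) (hqr b) (hG a σ b ▸ hGm a σ b)
    rw [hG]
    nlinarith [mul_le_mul_of_nonneg_left (hp_r a) (by positivity : 0 ≤ (k : ℝ) * m ^ 2)]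
  refine ⟨fun a => (hp_pos a).le, ?_, fun a b x => (abs_le.1 (hz a _ b)).1, fun x => ?_⟩
  · simp only [hp, Finset.sum_add_distrib, ← Finset.mul_sum, hr1, Finset.sum_const,
      Finset.card_univ, Fintype.card_fin, nsmul_eq_mul]
    field_simp
    ring
  · calc (1 / η ^ 2) * ∑ a, p a * Psi q (fun b => η * G a (Φ a x) b / p a)
        ≤ (1 / η ^ 2) * (k ^ 2 * (η ^ 2 * (2 * k * m ^ 2))) := by
          gcongr
          exact sum_mul_Psi_le hp_pos hq0 (fun a b => hz a _ b) (fun a b => hC a _ b)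
      _ = 2 * (k : ℝ) ^ 3 * m ^ 2 := by field_simp

theorem stmt8 (k d m : ℕ) (hk : 1 ≤ k) (hm : 1 ≤ m) (S : Type*) [Fintype S]
    (Φ : Fin k → Fin d → S)
    (T : InTree (Fin k))
    (w : (Fin k × Fin k) → Fin k → S → ℝ)
    (hwb : ∀ e ∈ T.edges, ∀ (c : Fin k) (σ : S), |w e c σ| ≤ (m : ℝ) / 2)
    (hws : ∀ e ∈ T.edges, ∀ (c : Fin k) (σ : S),
      c ≠ e.1 → c ≠ e.2 → w e c σ = 0)
    (G : Fin k → S → Fin k → ℝ)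
    (hG : ∀ (a : Fin k) (σ : S) (b : Fin k), G a σ b = ∑ e ∈ T.path b, w e a σ)
    (q r : Fin k → ℝ)
    (hq0 : ∀ a, 0 ≤ q a) (hq1 : ∑ a, q a = 1)
    (hr0 : ∀ a, 0 ≤ r a) (hr1 : ∑ a, r a = 1)
    (hqr : ∀ b, q b ≤ k * r b)
    (hrT : ∀ e ∈ T.edges, r e.1 ≤ r e.2)
    (η : ℝ) (hη : 0 < η) (hη2 : η ≤ 1 / (m * k ^ 2))
    (γ : ℝ) (hγ : γ = η * m * k ^ 2 / 2)
    (p : Fin k → ℝ) (hp : ∀ a, p a = (1 - γ) * r a + γ / k) :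
    (∀ a, 0 ≤ p a) ∧ (∑ a, p a = 1) ∧
    (∀ (a b : Fin k) (x : Fin d), -1 ≤ η * G a (Φ a x) b / p a) ∧
    (∀ x : Fin d,
      (1 / η ^ 2) * ∑ a, p a * Psi q (fun b => η * G a (Φ a x) b / p a)
        ≤ 2 * k ^ 3 * m ^ 2) :=
  stmt8_general k d m S Φ T w hwb hws G hG q r hq0 hr0 hr1 hqr hrT η hη hη2 γ hγ p hp
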